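/- arXiv:2209.12876 — 7 statements merged into one kernel-verified Lean document; each statement's English description precedes it below -/
import Mathlib

section
/- The real number log|g'(α)| / log|h'(β)| is irrational, where g'(α) = 1/(43+2√462)² and h'(β) = 1/(987+2√243542)². -/
/-!
Writing `A = 43 + 2√462` and `B = 987 + 2√243542`, the ratio is `log A / log B`, and a
rational value `p / q` would give `A ^ q = B ^ p`. Powers of `x + y√d` with `x, y > 0` keep
this shape, so this reads `x + y√462 = u + v√243542` with `y, v > 0`; squaring
`y√462 - v√243542 = u - x` makes `√462 · √243542 = √112516404` rational, although
`112516404 = 2² · 3 · 7 · 11 · 13 · 17 · 19 · 29` is not a square.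
-/

open Real

namespace Zsqrtd

variable {d : ℤ}

lemma re_pos_and_im_pos_mul (hd : 0 ≤ d) {z w : ℤ√d} (hz : 0 < z.re ∧ 0 < z.im)
    (hw : 0 < w.re ∧ 0 < w.im) : 0 < (z * w).re ∧ 0 < (z * w).im := by
  obtain ⟨hz₁, hz₂⟩ := hz
  obtain ⟨hw₁, hw₂⟩ := hw
  rw [re_mul, im_mul]
  constructor <;> positivity

lemma re_pos_and_im_pos_pow (hd : 0 ≤ d) {z : ℤ√d} (hz : 0 < z.re ∧ 0 < z.im) :
    ∀ {n : ℕ}, n ≠ 0 → 0 < (z ^ n).re ∧ 0 < (z ^ n).im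
  | 1, _ => by simpa using hz
  | n + 2, _ => by
    rw [pow_succ]
    exact re_pos_and_im_pos_mul hd (re_pos_and_im_pos_pow hd hz n.succ_ne_zero) hz

end Zsqrtd

lemma Irrational.add_mul_sqrt_ne_add_mul_sqrt {d e : ℤ} (hd : 0 ≤ d) (he : 0 ≤ e)
    (hde : Irrational (√d * √e)) {x y u v : ℤ} (hy : y ≠ 0) (hv : v ≠ 0) :
    x + y * √d ≠ u + v * √e := by
  intro h
  apply hde
  refine ⟨(y ^ 2 * d + v ^ 2 * e - (u - x) ^ 2) / (2 * y * v), ?_⟩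
  have hd' : √d * √d = d := mul_self_sqrt (mod_cast hd)
  have he' : √e * √e = e := mul_self_sqrt (mod_cast he)
  push_cast
  rw [div_eq_iff (by positivity)]
  linear_combination ((y:ℝ) * √d - v * √e + u - x) * h - y ^ 2 * hd' - v ^ 2 * he'

lemma Zsqrtd.toReal_pow_ne_toReal_pow {d e : ℤ} (hd : 0 ≤ d) (he : 0 ≤ e)
    (hde : Irrational (√d * √e)) {z : ℤ√d} {w : ℤ√e} (hz : 0 < z.re ∧ 0 < z.im)
    (hw : 0 < w.re ∧ 0 < w.im) {m n : ℕ} (hm : m ≠ 0) (hn : n ≠ 0) :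
    toReal hd z ^ m ≠ toReal he w ^ n := by
  rw [← map_pow, ← map_pow, toReal_apply, toReal_apply]
  exact hde.add_mul_sqrt_ne_add_mul_sqrt hd he (re_pos_and_im_pos_pow hd hz hm).2.ne'
    (re_pos_and_im_pos_pow he hw hn).2.ne'

lemma irrational_log_div_log {a b : ℝ} (ha : 1 < a) (hb : 1 < b)
    (hab : ∀ m n : ℕ, m ≠ 0 → n ≠ 0 → a ^ m ≠ b ^ n) : Irrational (log a / log b) := by
  rintro ⟨r, hr⟩
  have hr_pos : 0 < r := (Rat.cast_pos (K := ℝ)).mp (hr ▸ div_pos (log_pos ha) (log_pos hb))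
  obtain ⟨p, hp⟩ := Int.eq_ofNat_of_zero_le (Rat.num_nonneg.mpr hr_pos.le)
  have hp0 : p ≠ 0 := by
    rintro rfl
    exact (Rat.num_pos.mpr hr_pos).ne' hp
  have hlog : r.den * log a = p * log b := by
    rw [Rat.cast_def, hp, Int.cast_natCast,
      div_eq_div_iff (by positivity) (log_pos hb).ne'] at hr
    linarith
  refine hab r.den p r.den_ne_zero hp0 (log_injOn_pos (pow_pos (zero_lt_one.trans ha) _)
    (pow_pos (zero_lt_one.trans hb) _) ?_)
  rw [log_pow, log_pow, hlog]

lemma irrational_sqrt_462_mul_sqrt_243542 : Irrational (√462 * √243542) := by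
  rw [← sqrt_mul (by norm_num)]
  exact_mod_cast irrational_sqrt_natCast_iff.mpr (by norm_num [Nat.exists_mul_self'])

lemma log_abs_one_div_sq {a : ℝ} (ha : 0 < a) : log |1 / a ^ 2| = -(2 * log a) := by
  rw [abs_of_pos (by positivity), one_div, log_inv, log_pow, Nat.cast_ofNat]

/-- `log|g'(α)| / log|h'(β)|` is irrational, where `g'(α) = 1/(43+2√462)²` and
`h'(β) = 1/(987+2√243542)²`. -/
theorem stmt_3 :
    Irrational (Real.log |1 / (43 + 2 * Real.sqrt 462) ^ 2| /
      Real.log |1 / (987 + 2 * Real.sqrt 243542) ^ 2|) := by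
  have ha : 1 < 43 + 2 * √462 := by linarith [sqrt_nonneg 462]
  have hb : 1 < 987 + 2 * √243542 := by linarith [sqrt_nonneg 243542]
  rw [log_abs_one_div_sq (by linarith), log_abs_one_div_sq (by linarith), neg_div_neg_eq,
    mul_div_mul_left _ _ two_ne_zero]
  refine irrational_log_div_log ha hb fun m n hm hn => ?_
  simpa [Zsqrtd.toReal_apply] using
    Zsqrtd.toReal_pow_ne_toReal_pow (z := (⟨43, 2⟩ : ℤ√462)) (w := (⟨987, 2⟩ : ℤ√243542))
      (by norm_num) (by norm_num) (mod_cast irrational_sqrt_462_mul_sqrt_243542)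
      (by norm_num) (by norm_num) hm hn
end

section
/- Let f(x) = (p_{k-1}x + p_k)/(q_{k-1}x + q_k) be the inverse branch of the Gauss map associated to a finite continued fraction word (a_1,…,a_k) with all a_i ∈ {1,2,3,4}, where p_j/q_j = [0;a_1,…,a_j] are the convergents. Then for any x, y with (√2−1)/2 ≤ x, y ≤ 2√2−2, one has 1/2.3 < |f'(x)|/|f'(y)| < 2.3. -/
/-- Continued fraction numerators: `(cfP a n).1 = pₙ`, `(cfP a n).2 = pₙ₋₁`,
with `p₋₁ = 1`, `p₀ = a₀`, `pₙ₊₁ = aₙ₊₁ pₙ + pₙ₋₁`. -/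
noncomputable def cfP (a : ℕ → ℝ) : ℕ → ℝ × ℝ
  | 0 => (a 0, 1)
  | n + 1 => (a (n + 1) * (cfP a n).1 + (cfP a n).2, (cfP a n).1)

/-- Continued fraction denominators: `(cfQ a n).1 = qₙ`, `(cfQ a n).2 = qₙ₋₁`,
with `q₋₁ = 0`, `q₀ = 1`, `qₙ₊₁ = aₙ₊₁ qₙ + qₙ₋₁`. -/
noncomputable def cfQ (a : ℕ → ℝ) : ℕ → ℝ × ℝ
  | 0 => (1, 0)
  | n + 1 => (a (n + 1) * (cfQ a n).1 + (cfQ a n).2, (cfQ a n).1)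

/-- The `n`-th convergent `[a₀; a₁, …, aₙ] = pₙ/qₙ` of the continued fraction with
partial quotients `a`. -/
noncomputable def cfConv (a : ℕ → ℝ) (n : ℕ) : ℝ := (cfP a n).1 / (cfQ a n).1

/-- `x` is the value of the infinite continued fraction `[a₀; a₁, a₂, …]`, i.e. the limit
of its convergents. -/
def IsCFVal (a : ℕ → ℝ) (x : ℝ) : Prop :=
  Filter.Tendsto (cfConv a) Filter.atTop (nhds x)

/-!
The derivative of the Möbius map `f(z) = (p_{k-1} z + p_k)/(q_{k-1} z + q_k)` has modulus
`1/(q_{k-1} z + q_k)²`, because `p_{k-1} q_k - p_k q_{k-1} = ±1`. Hence the distortion ratio is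
`((q_{k-1} y + q_k)/(q_{k-1} x + q_k))²`. Since `0 ≤ q_{k-1} ≤ q_k`, the ratio
`(C v + D)/(C u + D)` over `u, v ∈ [lo, hi]` is largest for `C = D`, `v = hi`, `u = lo`, so it is
at most `(hi + 1)/(lo + 1)`; for `lo = (√2 - 1)/2`, `hi = 2√2 - 2` the square of this bound is
`172 - 120√2 < 2.3`.
-/

open Set

lemma cfP_cfQ_det (b : ℕ → ℝ) (n : ℕ) :
    (cfP b n).2 * (cfQ b n).1 - (cfP b n).1 * (cfQ b n).2 = (-1) ^ n := by
  induction n with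
  | zero => simp [cfP, cfQ]
  | succ n ih =>
    simp only [cfP, cfQ, pow_succ]
    linear_combination -ih

lemma cfQ_bounds (b : ℕ → ℝ) (n : ℕ) (hb : ∀ j, 1 ≤ j → j ≤ n → 1 ≤ b j) :
    0 ≤ (cfQ b n).2 ∧ (cfQ b n).2 ≤ (cfQ b n).1 ∧ 1 ≤ (cfQ b n).1 := by
  induction n with
  | zero => simp [cfQ]
  | succ n ih =>
    obtain ⟨hsnd, hle, hfst⟩ := ih fun j hj1 hj2 => hb j hj1 (hj2.trans n.le_succ)
    have hbn : 1 ≤ b (n + 1) := hb (n + 1) n.succ_pos le_rfl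
    simp only [cfQ]
    refine ⟨by linarith, by nlinarith, by nlinarith⟩

lemma hasDerivAt_mobius (A B C D z : ℝ) (hz : C * z + D ≠ 0) :
    HasDerivAt (fun w => (A * w + B) / (C * w + D))
      ((A * D - B * C) / (C * z + D) ^ 2) z := by
  have hnum : HasDerivAt (fun w => A * w + B) A z := by
    simpa using ((hasDerivAt_id z).const_mul A).add_const B
  have hden : HasDerivAt (fun w => C * w + D) C z := by
    simpa using ((hasDerivAt_id z).const_mul C).add_const D
  refine (hnum.div hden hz).congr_deriv ?_
  ring

lemma abs_deriv_mobius_div {A B C D x y : ℝ} (hdet : A * D - B * C ≠ 0)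
    (hx : C * x + D ≠ 0) (hy : C * y + D ≠ 0) :
    |deriv (fun w => (A * w + B) / (C * w + D)) x| /
        |deriv (fun w => (A * w + B) / (C * w + D)) y| =
      (C * y + D) ^ 2 / (C * x + D) ^ 2 := by
  rw [(hasDerivAt_mobius A B C D x hx).deriv, (hasDerivAt_mobius A B C D y hy).deriv]
  simp only [abs_div, abs_pow, sq_abs]
  field_simp

lemma affine_div_affine_le {C D lo hi u v : ℝ} (hC : 0 ≤ C) (hCD : C ≤ D) (hD : 0 < D)
    (hlo : 0 ≤ lo) (hu : u ∈ Icc lo hi) (hv : v ≤ hi) :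
    (C * v + D) / (C * u + D) ≤ (hi + 1) / (lo + 1) := by
  obtain ⟨hlou, huhi⟩ := hu
  have hu_pos : 0 < C * u + D := by nlinarith
  rw [div_le_div_iff₀ hu_pos (by linarith)]
  calc (C * v + D) * (lo + 1) ≤ (C * hi + D) * (lo + 1) := by gcongr
    _ ≤ (C * lo + D) * (hi + 1) := by
        nlinarith [mul_le_mul_of_nonneg_right hCD (sub_nonneg.2 (hlou.trans huhi))]
    _ ≤ (hi + 1) * (C * u + D) := by rw [mul_comm (hi + 1)]; gcongr; linarith

lemma sqrt_two_sub_one_div_two_nonneg : 0 ≤ (√2 - 1) / 2 := by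
  linarith [Real.one_lt_sqrt_two]

lemma distortion_constant_lt :
    ((2 * √2 - 2 + 1) / ((√2 - 1) / 2 + 1)) ^ 2 < 2.3 := by
  have hsq : √2 ^ 2 = 2 := Real.sq_sqrt (by norm_num)
  have hden : 0 < (√2 - 1) / 2 + 1 := by linarith [sqrt_two_sub_one_div_two_nonneg]
  rw [div_pow, div_lt_iff₀ (pow_pos hden 2)]
  nlinarith [Real.sqrt_nonneg 2]

lemma affine_sq_div_lt {C D u v : ℝ} (hC : 0 ≤ C) (hCD : C ≤ D) (hD : 0 < D)
    (hu : u ∈ Icc ((√2 - 1) / 2) (2 * √2 - 2)) (hv : v ∈ Icc ((√2 - 1) / 2) (2 * √2 - 2)) :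
    (C * v + D) ^ 2 / (C * u + D) ^ 2 < 2.3 := by
  have hlo := sqrt_two_sub_one_div_two_nonneg
  have hv_pos : 0 ≤ C * v + D := by nlinarith [hv.1]
  rw [← div_pow]
  calc ((C * v + D) / (C * u + D)) ^ 2
      ≤ ((2 * √2 - 2 + 1) / ((√2 - 1) / 2 + 1)) ^ 2 :=
        pow_le_pow_left₀ (div_nonneg hv_pos (by nlinarith [hu.1]))
          (affine_div_affine_le hC hCD hD hlo hu hv.2) 2
    _ < 2.3 := distortion_constant_lt

theorem stmt_5_general (k : ℕ) (a : ℕ → ℕ)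
    (ha : ∀ j, 1 ≤ j → j ≤ k → 1 ≤ a j ∧ a j ≤ 4)
    (b : ℕ → ℝ) (hb : b = fun j => if j = 0 then 0 else (a j : ℝ))
    (f : ℝ → ℝ)
    (hf : f = fun z => ((cfP b k).2 * z + (cfP b k).1) / ((cfQ b k).2 * z + (cfQ b k).1))
    (x y : ℝ)
    (hx1 : (Real.sqrt 2 - 1) / 2 ≤ x) (hx2 : x ≤ 2 * Real.sqrt 2 - 2)
    (hy1 : (Real.sqrt 2 - 1) / 2 ≤ y) (hy2 : y ≤ 2 * Real.sqrt 2 - 2) :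
    1 / 2.3 < |deriv f x| / |deriv f y| ∧ |deriv f x| / |deriv f y| < 2.3 := by
  have hb_one : ∀ j, 1 ≤ j → j ≤ k → 1 ≤ b j := fun j hj1 hj2 => by
    simpa [hb, Nat.one_le_iff_ne_zero.1 hj1] using (ha j hj1 hj2).1
  obtain ⟨hC, hCD, hD⟩ := cfQ_bounds b k hb_one
  have hdet : (cfP b k).2 * (cfQ b k).1 - (cfP b k).1 * (cfQ b k).2 ≠ 0 := by
    rw [cfP_cfQ_det]
    exact pow_ne_zero _ (by norm_num)
  have hlo := sqrt_two_sub_one_div_two_nonneg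
  have hx : 0 < (cfQ b k).2 * x + (cfQ b k).1 := by nlinarith
  have hy : 0 < (cfQ b k).2 * y + (cfQ b k).1 := by nlinarith
  rw [hf, abs_deriv_mobius_div hdet hx.ne' hy.ne']
  refine ⟨?_, affine_sq_div_lt hC hCD (by linarith) ⟨hx1, hx2⟩ ⟨hy1, hy2⟩⟩
  rw [one_div_lt (by norm_num) (by positivity), one_div_div]
  exact affine_sq_div_lt hC hCD (by linarith) ⟨hy1, hy2⟩ ⟨hx1, hx2⟩

/-- Bounded distortion for inverse branches of the Gauss map: if
`f(x) = (pₖ₋₁ x + pₖ)/(qₖ₋₁ x + qₖ)` is the inverse branch associated to a word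
`(a₁, …, aₖ)` with all letters in `{1,2,3,4}` (where `pⱼ/qⱼ = [0; a₁, …, aⱼ]` are
the convergents), then `1/2.3 < |f'(x)|/|f'(y)| < 2.3` for all
`(√2−1)/2 ≤ x, y ≤ 2√2−2`. -/
theorem stmt_5 (k : ℕ) (hk : 1 ≤ k) (a : ℕ → ℕ)
    (ha : ∀ j, 1 ≤ j → j ≤ k → 1 ≤ a j ∧ a j ≤ 4)
    (b : ℕ → ℝ) (hb : b = fun j => if j = 0 then 0 else (a j : ℝ))
    (f : ℝ → ℝ)
    (hf : f = fun z => ((cfP b k).2 * z + (cfP b k).1) / ((cfQ b k).2 * z + (cfQ b k).1))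
    (x y : ℝ)
    (hx1 : (Real.sqrt 2 - 1) / 2 ≤ x) (hx2 : x ≤ 2 * Real.sqrt 2 - 2)
    (hy1 : (Real.sqrt 2 - 1) / 2 ≤ y) (hy2 : y ≤ 2 * Real.sqrt 2 - 2) :
    1 / 2.3 < |deriv f x| / |deriv f y| ∧ |deriv f x| / |deriv f y| < 2.3 :=
  stmt_5_general k a ha b hb f hf x y hx1 hx2 hy1 hy2
end

section
/- Let α = [0; \overline{3,1,3,1,2,1}] = (2√462−29)/53, let α₁ = [0; 3,1,3,1,2,1,\overline{3,4}], and let α₂ = [0; 3,1,3,1,2,1,2,\overline{1,3}]. Then (α₁ − α)/(α₂ − α₁) < 1. -/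
/-!
A continued fraction whose partial quotients are eventually periodic is a Möbius image of its
periodic tail, the coefficients being the last two convergents of the prefix:
`α₁ = (19 t₁ + 14) / (72 t₁ + 53)` with `t₁ = [3; 4, 3, 4, …] = (3 + 2√3) / 2`, and
`α₂ = (52 t₂ + 19) / (197 t₂ + 72)` with `t₂ = [1; 3, 1, 3, …] = (3 + √21) / 6`.
The purely periodic fractions converge to the positive root `x` of `x = b + 1 / (c + 1 / x)`,
since the convergents approximate any positive solution of the complete-quotient recursion
`sₙ = aₙ + 1 / sₙ₊₁` to within `1 / (n + 1)`. The ratio in question is about `0.985`, so the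
three values must be bounded to about eight decimal places; as the Möbius maps have derivative
`±1 / (q t + q')² ≈ 10⁻⁵`, four-digit bounds on `t₁` and `t₂` already suffice for that.
-/

open Filter Topology

section Continuants

variable {a : ℕ → ℝ}

theorem cfP_fst_mul_cfQ_snd_sub (a : ℕ → ℝ) (n : ℕ) :
    (cfP a n).1 * (cfQ a n).2 - (cfP a n).2 * (cfQ a n).1 = (-1) ^ (n + 1) := by
  induction n with
  | zero => simp [cfP, cfQ]
  | succ n ih =>
    simp only [cfP, cfQ, pow_succ]
    linear_combination -ih

theorem cfQ_pos (ha : ∀ n, 0 < a (n + 1)) (n : ℕ) : 0 < (cfQ a n).1 ∧ 0 ≤ (cfQ a n).2 := by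
  induction n with
  | zero => simp [cfQ]
  | succ n ih =>
    obtain ⟨hq, hq'⟩ := ih
    have := mul_pos (ha n) hq
    exact ⟨by simp only [cfQ]; linarith, hq.le⟩

theorem cfQ_bounds_s8 (ha : ∀ n, 1 ≤ a (n + 1)) (n : ℕ) :
    1 ≤ (cfQ a n).1 ∧ 0 ≤ (cfQ a n).2 ∧ (n : ℝ) + 1 ≤ (cfQ a n).1 + (cfQ a n).2 := by
  induction n with
  | zero => simp [cfQ]
  | succ n ih =>
    obtain ⟨hq, hq', hsum⟩ := ih
    have : (cfQ a n).1 ≤ a (n + 1) * (cfQ a n).1 := le_mul_of_one_le_left (by linarith) (ha n)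
    simp only [cfQ]
    push_cast
    exact ⟨by linarith, by linarith, by linarith⟩

theorem eq_smul_cfP_add_smul_cfQ_of_rec {f : ℕ → ℝ × ℝ}
    (hf : ∀ n, f (n + 1) = (a (n + 1) * (f n).1 + (f n).2, (f n).1)) (k n : ℕ) :
    f (k + 1 + n) = (f k).1 • cfP (fun m => a (k + 1 + m)) n
      + (f k).2 • cfQ (fun m => a (k + 1 + m)) n := by
  induction n with
  | zero => ext <;> simp [hf, cfP, cfQ, mul_comm]
  | succ n ih =>
    rw [← add_assoc, hf, ih]
    ext
    · simp only [cfP, cfQ, Prod.fst_add, Prod.snd_add, Prod.smul_fst, Prod.smul_snd, smul_eq_mul,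
        ← add_assoc]
      ring
    · simp only [cfP, cfQ, Prod.fst_add, Prod.snd_add, Prod.smul_fst, Prod.smul_snd]

theorem cfP_add (a : ℕ → ℝ) (k n : ℕ) :
    cfP a (k + 1 + n) = (cfP a k).1 • cfP (fun m => a (k + 1 + m)) n
      + (cfP a k).2 • cfQ (fun m => a (k + 1 + m)) n :=
  eq_smul_cfP_add_smul_cfQ_of_rec (fun _ => rfl) k n

theorem cfQ_add (a : ℕ → ℝ) (k n : ℕ) :
    cfQ a (k + 1 + n) = (cfQ a k).1 • cfP (fun m => a (k + 1 + m)) n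
      + (cfQ a k).2 • cfQ (fun m => a (k + 1 + m)) n :=
  eq_smul_cfP_add_smul_cfQ_of_rec (fun _ => rfl) k n

theorem cfConv_add (ha : ∀ n, 0 < a (n + 1)) (k n : ℕ) :
    cfConv a (k + 1 + n) =
      ((cfP a k).1 * cfConv (fun m => a (k + 1 + m)) n + (cfP a k).2) /
        ((cfQ a k).1 * cfConv (fun m => a (k + 1 + m)) n + (cfQ a k).2) := by
  have hq := (cfQ_pos (a := fun m => a (k + 1 + m)) (fun m => ha (k + 1 + m)) n).1
  simp only [cfConv, cfP_add, cfQ_add, Prod.fst_add, Prod.smul_fst, smul_eq_mul]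
  rw [← div_div_div_cancel_right₀ hq.ne']
  congr 1 <;> field_simp

end Continuants

section CompleteQuotients

variable {a s : ℕ → ℝ}

theorem cfP_mul_add_eq_of_completeQuot (hs : ∀ n, 0 < s (n + 1))
    (hrec : ∀ n, s n = a n + 1 / s (n + 1)) (n : ℕ) :
    (cfP a n).1 * s (n + 1) + (cfP a n).2 = s 0 * ((cfQ a n).1 * s (n + 1) + (cfQ a n).2) := by
  induction n with
  | zero =>
    simp only [cfP, cfQ]
    rw [hrec 0]
    field_simp [(hs 0).ne']
    ring
  | succ n ih =>
    have hmul : s (n + 1) * s (n + 2) = a (n + 1) * s (n + 2) + 1 := by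
      rw [hrec (n + 1)]
      field_simp [(hs (n + 1)).ne']
    simp only [cfP, cfQ]
    linear_combination s (n + 2) * ih - ((cfP a n).1 - s 0 * (cfQ a n).1) * hmul

theorem abs_cfConv_sub_le (ha : ∀ n, 1 ≤ a (n + 1)) (hs : ∀ n, 0 < s (n + 1))
    (hrec : ∀ n, s n = a n + 1 / s (n + 1)) (n : ℕ) :
    |cfConv a n - s 0| ≤ 1 / (n + 1) := by
  obtain ⟨hq, hq', hsum⟩ := cfQ_bounds_s8 ha n
  have hs1 : 1 ≤ s (n + 1) := by
    rw [hrec (n + 1)]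
    linarith [ha n, one_div_pos.2 (hs (n + 1))]
  set D := (cfQ a n).1 * s (n + 1) + (cfQ a n).2
  have hD : (n : ℝ) + 1 ≤ D := by nlinarith
  have hD0 : 0 < D := by positivity
  have hs0 : s 0 = ((cfP a n).1 * s (n + 1) + (cfP a n).2) / D :=
    (eq_div_iff hD0.ne').2 (cfP_mul_add_eq_of_completeQuot hs hrec n).symm
  have herr : cfConv a n - s 0 = (-1) ^ (n + 1) / ((cfQ a n).1 * D) := by
    rw [hs0, cfConv, div_sub_div _ _ (by positivity) hD0.ne', ← cfP_fst_mul_cfQ_snd_sub]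
    ring
  rw [herr, abs_div, abs_pow, abs_neg, abs_one, one_pow, abs_of_pos (by positivity)]
  calc 1 / ((cfQ a n).1 * D) ≤ 1 / D :=
        one_div_le_one_div_of_le hD0 (le_mul_of_one_le_left hD0.le hq)
    _ ≤ 1 / (n + 1) := one_div_le_one_div_of_le (by positivity) hD

theorem isCFVal_of_completeQuot (ha : ∀ n, 1 ≤ a (n + 1)) (hs : ∀ n, 0 < s (n + 1))
    (hrec : ∀ n, s n = a n + 1 / s (n + 1)) : IsCFVal a (s 0) := by
  have h0 : Tendsto (fun n => cfConv a n - s 0) atTop (𝓝 0) :=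
    squeeze_zero_norm (fun n => (Real.norm_eq_abs _).trans_le (abs_cfConv_sub_le ha hs hrec n))
      tendsto_one_div_add_atTop_nhds_zero_nat
  simpa [IsCFVal] using h0.add_const (s 0)

end CompleteQuotients

theorem isCFVal_periodic_two {b c x : ℝ} (hb : 1 ≤ b) (hc : 1 ≤ c) (hx : 0 < x)
    (hfix : x = b + 1 / (c + 1 / x)) : IsCFVal (fun n => if n % 2 = 0 then b else c) x := by
  have := isCFVal_of_completeQuot (a := fun n => if n % 2 = 0 then b else c)
    (s := fun n => if n % 2 = 0 then x else c + 1 / x) ?ha ?hs ?hrec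
  · simpa using this
  case ha => intro n; split_ifs <;> linarith
  case hs => intro n; split_ifs <;> positivity
  case hrec =>
    intro n
    rcases Nat.mod_two_eq_zero_or_one n with h | h
    · simpa [h, show (n + 1) % 2 = 1 by omega] using hfix
    · simp [h, show (n + 1) % 2 = 0 by omega]

theorem IsCFVal.eq_div_of_tail {a : ℕ → ℝ} (ha : ∀ n, 0 < a (n + 1)) {k : ℕ} {x t : ℝ}
    (hx : IsCFVal a x) (ht : IsCFVal (fun m => a (k + 1 + m)) t) (ht0 : 0 < t) :
    x = ((cfP a k).1 * t + (cfP a k).2) / ((cfQ a k).1 * t + (cfQ a k).2) := by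
  obtain ⟨hq, hq'⟩ := cfQ_pos ha k
  have hden : 0 < (cfQ a k).1 * t + (cfQ a k).2 := by positivity
  have hlim := ((ht.const_mul (cfP a k).1).add_const (cfP a k).2).div
    ((ht.const_mul (cfQ a k).1).add_const (cfQ a k).2) hden.ne'
  have hshift : Tendsto (fun n => k + 1 + n) atTop atTop :=
    (tendsto_add_atTop_nat (k + 1)).congr fun n => add_comm n (k + 1)
  exact tendsto_nhds_unique (hx.comp hshift) (hlim.congr fun n => (cfConv_add ha k n).symm)

theorem isCFVal_three_four :
    IsCFVal (fun n => if n % 2 = 0 then 3 else 4) ((3 + 2 * √3) / 2) := by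
  have h3 : √3 ^ 2 = 3 := Real.sq_sqrt (by norm_num)
  refine isCFVal_periodic_two (by norm_num) (by norm_num) (by positivity) ?_
  field_simp
  linear_combination 16 * h3

theorem isCFVal_one_three :
    IsCFVal (fun n => if n % 2 = 0 then 1 else 3) ((3 + √21) / 6) := by
  have h21 : √21 ^ 2 = 21 := Real.sq_sqrt (by norm_num)
  refine isCFVal_periodic_two (by norm_num) (by norm_num) (by positivity) ?_
  field_simp
  linear_combination 3 * h21

theorem eq_of_isCFVal_α₁_quotients {x : ℝ} (hx : IsCFVal (fun n => if n = 0 then 0 else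
    if n ≤ 6 then ([3, 1, 3, 1, 2, 1].getD (n - 1) 0 : ℝ)
    else if (n - 7) % 2 = 0 then 3 else 4) x) :
    x = (19 * ((3 + 2 * √3) / 2) + 14) / (72 * ((3 + 2 * √3) / 2) + 53) := by
  rw [hx.eq_div_of_tail (k := 6) (t := (3 + 2 * √3) / 2) ?pos ?tail (by positivity)]
  · norm_num [cfP, cfQ]
  case pos =>
    intro n
    simp only [Nat.add_one_ne_zero, if_false]
    split_ifs with h6
    · have : n < 6 := by omega
      interval_cases n <;> norm_num
    all_goals norm_num
  case tail =>
    convert isCFVal_three_four using 1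
    funext m
    rw [if_neg (by omega), if_neg (by omega), show 6 + 1 + m - 7 = m by omega]

theorem eq_of_isCFVal_α₂_quotients {x : ℝ} (hx : IsCFVal (fun n => if n = 0 then 0 else
    if n ≤ 7 then ([3, 1, 3, 1, 2, 1, 2].getD (n - 1) 0 : ℝ)
    else if (n - 8) % 2 = 0 then 1 else 3) x) :
    x = (52 * ((3 + √21) / 6) + 19) / (197 * ((3 + √21) / 6) + 72) := by
  rw [hx.eq_div_of_tail (k := 7) (t := (3 + √21) / 6) ?pos ?tail (by positivity)]
  · norm_num [cfP, cfQ]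
  case pos =>
    intro n
    simp only [Nat.add_one_ne_zero, if_false]
    split_ifs with h7
    · have : n < 7 := by omega
      interval_cases n <;> norm_num
    all_goals norm_num
  case tail =>
    convert isCFVal_one_three using 1
    funext m
    rw [if_neg (by omega), if_neg (by omega), show 7 + 1 + m - 8 = m by omega]

/-- With `α = [0; ̅ 3,1,3,1,2,1] = (2√462−29)/53`,
`α₁ = [0; 3,1,3,1,2,1, ̅ 3,4]` and `α₂ = [0; 3,1,3,1,2,1,2, ̅ 1,3]`, one has
`(α₁ − α)/(α₂ − α₁) < 1`. -/
theorem stmt_8 (α α₁ α₂ : ℝ)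
    (hα : α = (2 * Real.sqrt 462 - 29) / 53)
    (hα₁ : IsCFVal (fun n => if n = 0 then 0 else if n ≤ 6 then
      ([3, 1, 3, 1, 2, 1].getD (n - 1) 0 : ℝ)
      else if (n - 7) % 2 = 0 then 3 else 4) α₁)
    (hα₂ : IsCFVal (fun n => if n = 0 then 0 else if n ≤ 7 then
      ([3, 1, 3, 1, 2, 1, 2].getD (n - 1) 0 : ℝ)
      else if (n - 8) % 2 = 0 then 1 else 3) α₂) :
    (α₁ - α) / (α₂ - α₁) < 1 := by
  have h3 : 1.732 < √3 := (Real.lt_sqrt (by norm_num)).2 (by norm_num)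
  have h21 : 4.5825 < √21 := (Real.lt_sqrt (by norm_num)).2 (by norm_num)
  have h462 : 21.494185 < √462 := (Real.lt_sqrt (by norm_num)).2 (by norm_num)
  have hα₁_lt : α₁ < 0.26393752 := by
    rw [eq_of_isCFVal_α₁_quotients hα₁, div_lt_iff₀ (by positivity)]
    linarith
  have hα₂_gt : 0.26394355 < α₂ := by
    rw [eq_of_isCFVal_α₂_quotients hα₂, lt_div_iff₀ (by positivity)]
    linarith
  have hα_gt : 0.26393150 < α := by
    rw [hα, lt_div_iff₀ (by norm_num)]
    linarith
  rw [div_lt_one (by linarith)]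
  linarith
end

section
/- Suppose A, B ⊆ ℝ, A ⊆ [a, a'] ∪ [a'', ∞) with a ≤ a' < a'', B ⊆ [b, b'] ∪ [b'', ∞) with b ≤ b' < b'', and suppose b' − b < a'' − a' and a' − a < b'' − b'. Then there exists a nonempty open interval I ⊂ ℝ with I ∩ (A + B) = ∅ and inf I ≥ a + b. -/
open scoped Pointwise

/-! The sums from the two lower pieces stay at most `a' + b'`, while every sum involving an upper
piece is at least `a + b''` or `a'' + b`; the hypotheses say exactly that both bounds exceed
`a' + b'`, so `(a' + b', min (a + b'') (a'' + b))` is a gap of `A + B`. -/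

namespace Set

variable {α : Type*}

theorem Ioo_inter_eq_empty_of_subset_Iic_union_Ici [LinearOrder α] {s : Set α} {u v : α}
    (h : s ⊆ Iic u ∪ Ici v) : Ioo u v ∩ s = ∅ := by
  have hIoo : Ioo u v = (Iic u ∪ Ici v)ᶜ := by
    rw [compl_union, compl_Iic, compl_Ici, Ioi_inter_Iio]
  rw [hIoo, ← disjoint_iff_inter_eq_empty, disjoint_compl_left_iff_subset]
  exact h

theorem Icc_union_Ici_add_Icc_union_Ici_subset [AddCommMonoid α] [LinearOrder α]
    [IsOrderedAddMonoid α] {a a' a'' b b' b'' : α} (hb : b ≤ b'') :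
    (Icc a a' ∪ Ici a'') + (Icc b b' ∪ Ici b'') ⊆ Iic (a' + b') ∪ Ici (min (a + b'') (a'' + b)) := by
  rw [union_add, add_union, add_union]
  refine union_subset (union_subset ?_ ?_) (union_subset ?_ ?_)
  · exact (Icc_add_Icc_subset a a' b b').trans (Icc_subset_Iic_self.trans subset_union_left)
  · calc Icc a a' + Ici b'' ⊆ Ici a + Ici b'' := add_subset_add_right Icc_subset_Ici_self
      _ ⊆ Ici (a + b'') := Ici_add_Ici_subset a b''
      _ ⊆ _ := (Ici_subset_Ici.mpr (min_le_left _ _)).trans subset_union_right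
  · calc Ici a'' + Icc b b' ⊆ Ici a'' + Ici b := add_subset_add_left Icc_subset_Ici_self
      _ ⊆ Ici (a'' + b) := Ici_add_Ici_subset a'' b
      _ ⊆ _ := (Ici_subset_Ici.mpr (min_le_right _ _)).trans subset_union_right
  · calc Ici a'' + Ici b'' ⊆ Ici (a'' + b'') := Ici_add_Ici_subset a'' b''
      _ ⊆ Ici (a'' + b) := Ici_subset_Ici.mpr (add_le_add_right hb a'')
      _ ⊆ _ := (Ici_subset_Ici.mpr (min_le_right _ _)).trans subset_union_right

end Set

theorem stmt_10_general (A B : Set ℝ) (a a' a'' b b' b'' : ℝ)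
    (ha1 : a ≤ a') (hb1 : b ≤ b')
    (hA : A ⊆ Set.Icc a a' ∪ Set.Ici a'') (hB : B ⊆ Set.Icc b b' ∪ Set.Ici b'')
    (h1 : b' - b < a'' - a') (h2 : a' - a < b'' - b') :
    ∃ u v : ℝ, u < v ∧ a + b ≤ u ∧ Set.Ioo u v ∩ (A + B) = ∅ := by
  refine ⟨a' + b', min (a + b'') (a'' + b), lt_min (by linarith) (by linarith), by linarith, ?_⟩
  have hb : b ≤ b'' := by linarith
  exact Set.Ioo_inter_eq_empty_of_subset_Iic_union_Ici
    ((Set.add_subset_add hA hB).trans (Set.Icc_union_Ici_add_Icc_union_Ici_subset hb))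

/-- If `A ⊆ [a,a'] ∪ [a'',∞)` with `a ≤ a' < a''`, `B ⊆ [b,b'] ∪ [b'',∞)` with
`b ≤ b' < b''`, and `b'−b < a''−a'`, `a'−a < b''−b'`, then there is a nonempty open
interval disjoint from `A + B` whose infimum is at least `a + b`. -/
theorem stmt_10 (A B : Set ℝ) (a a' a'' b b' b'' : ℝ)
    (ha1 : a ≤ a') (ha2 : a' < a'') (hb1 : b ≤ b') (hb2 : b' < b'')
    (hA : A ⊆ Set.Icc a a' ∪ Set.Ici a'') (hB : B ⊆ Set.Icc b b' ∪ Set.Ici b'')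
    (h1 : b' - b < a'' - a') (h2 : a' - a < b'' - b') :
    ∃ u v : ℝ, u < v ∧ a + b ≤ u ∧ Set.Ioo u v ∩ (A + B) = ∅ :=
  stmt_10_general A B a a' a'' b b' b'' ha1 hb1 hA hB h1 h2
end

section
/- The value of the doubly-infinite periodic continued-fraction sum λ₀(\overline{1,1,1,2,1,2,1,1,3,3,3}) = [3; 3,3,1,1,2,1,2,1,1,1, 3,3,3,1,1,2,1,2,1,1,1, …] + [0; 1,1,1,2,1,2,1,1,3,3,3, 1,1,1,2,1,2,1,1,3,3,3, …] satisfies 3.9387762419810 < λ₀ < 3.9387762419811. -/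
/-!
The two halves of `λ₀` are values of continued fractions with positive partial quotients,
so each lies between consecutive convergents: even-index convergents increase and odd-index
ones decrease, by the determinant identity `pₙ₊₁qₙ - pₙqₙ₊₁ = (-1)ⁿ`. The 22nd and 23rd
convergents of both halves are computed exactly, and the resulting rational bounds on the sum
already lie inside the stated interval.
-/

section Convergents

variable (a : ℕ → ℝ)

lemma cfP_add_two_fst (n : ℕ) :
    (cfP a (n + 2)).1 = a (n + 2) * (cfP a (n + 1)).1 + (cfP a n).1 := rfl

lemma cfQ_add_two_fst (n : ℕ) :
    (cfQ a (n + 2)).1 = a (n + 2) * (cfQ a (n + 1)).1 + (cfQ a n).1 := rfl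

lemma cfP_succ_mul_cfQ_sub_cfP_mul_cfQ_succ (n : ℕ) :
    (cfP a (n + 1)).1 * (cfQ a n).1 - (cfP a n).1 * (cfQ a (n + 1)).1 = (-1) ^ n := by
  induction n with
  | zero => simp [cfP, cfQ]; ring
  | succ n ih =>
    rw [cfP_add_two_fst, cfQ_add_two_fst, pow_succ]
    linear_combination (-1 : ℝ) * ih

variable {a}

lemma cfQ_fst_pos (ha : ∀ n, 0 < a (n + 1)) (n : ℕ) : 0 < (cfQ a n).1 := by
  suffices 0 < (cfQ a n).1 ∧ 0 ≤ (cfQ a n).2 from this.1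
  induction n with
  | zero => simp [cfQ]
  | succ n ih =>
    exact ⟨add_pos_of_pos_of_nonneg (mul_pos (ha n) ih.1) ih.2, ih.1.le⟩

lemma cfConv_add_two_sub (ha : ∀ n, 0 < a (n + 1)) (n : ℕ) :
    cfConv a (n + 2) - cfConv a n
      = a (n + 2) * (-1) ^ n / ((cfQ a (n + 2)).1 * (cfQ a n).1) := by
  rw [cfConv, cfConv, div_sub_div _ _ (cfQ_fst_pos ha _).ne' (cfQ_fst_pos ha _).ne',
    cfP_add_two_fst, cfQ_add_two_fst]
  congr 1
  linear_combination a (n + 2) * cfP_succ_mul_cfQ_sub_cfP_mul_cfQ_succ a n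

lemma neg_one_pow_mul_cfConv_add_two_sub_pos (ha : ∀ n, 0 < a (n + 1)) (n : ℕ) :
    0 < (-1) ^ n * (cfConv a (n + 2) - cfConv a n) := by
  rw [cfConv_add_two_sub ha, mul_div_assoc', mul_left_comm, ← pow_add, ← two_mul,
    pow_mul, neg_one_sq, one_pow, mul_one]
  exact div_pos (ha (n + 1)) (mul_pos (cfQ_fst_pos ha _) (cfQ_fst_pos ha _))

lemma monotone_cfConv_two_mul (ha : ∀ n, 0 < a (n + 1)) :
    Monotone fun k => cfConv a (2 * k) := by
  refine monotone_nat_of_le_succ fun k => ?_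
  have := neg_one_pow_mul_cfConv_add_two_sub_pos ha (2 * k)
  rw [(even_two_mul k).neg_one_pow, one_mul] at this
  simp only [mul_add, mul_one]
  linarith

lemma antitone_cfConv_two_mul_add_one (ha : ∀ n, 0 < a (n + 1)) :
    Antitone fun k => cfConv a (2 * k + 1) := by
  refine antitone_nat_of_succ_le fun k => ?_
  have := neg_one_pow_mul_cfConv_add_two_sub_pos ha (2 * k + 1)
  rw [(odd_two_mul_add_one k).neg_one_pow, neg_one_mul] at this
  simp only [show 2 * (k + 1) + 1 = 2 * k + 1 + 2 by ring]
  linarith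

end Convergents

namespace IsCFVal

variable {a : ℕ → ℝ} {x : ℝ}

lemma cfConv_two_mul_le (hx : IsCFVal a x) (ha : ∀ n, 0 < a (n + 1)) (k : ℕ) :
    cfConv a (2 * k) ≤ x :=
  (monotone_cfConv_two_mul ha).ge_of_tendsto
    (hx.comp (strictMono_mul_left_of_pos two_pos).tendsto_atTop) k

lemma le_cfConv_two_mul_add_one (hx : IsCFVal a x) (ha : ∀ n, 0 < a (n + 1)) (k : ℕ) :
    x ≤ cfConv a (2 * k + 1) :=
  (antitone_cfConv_two_mul_add_one ha).le_of_tendsto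
    (hx.comp ((Filter.tendsto_add_atTop_nat 1).comp
      (strictMono_mul_left_of_pos two_pos).tendsto_atTop)) k

end IsCFVal

def periodicCF (a₀ : ℝ) (w : List ℝ) (n : ℕ) : ℝ :=
  if n = 0 then a₀ else w.getD ((n - 1) % w.length) 0

lemma periodicCF_succ_pos {a₀ : ℝ} {w : List ℝ} (hw : ∀ x ∈ w, 0 < x) (hne : w ≠ [])
    (n : ℕ) : 0 < periodicCF a₀ w (n + 1) := by
  have hlen : n % w.length < w.length := Nat.mod_lt _ (List.length_pos_iff.2 hne)
  simpa [periodicCF, List.getElem?_eq_getElem hlen] using hw _ (List.getElem_mem hlen)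

/-- The value of `λ₀` for the bi-infinite periodic sequence with period word
`1,1,1,2,1,2,1,1,3,3,3` and 0th position at the final `3`, i.e.
`[3; 3,3,1,1,2,1,2,1,1,1, 3,3,3,1,1,2,1,2,1,1,1, …] + [0; ̅ 1,1,1,2,1,2,1,1,3,3,3]`,
lies strictly between `3.9387762419810` and `3.9387762419811`. -/
theorem stmt_11 (ℓL ℓR : ℝ)
    (hL : IsCFVal (fun n => if n = 0 then 3 else
      ([3, 3, 1, 1, 2, 1, 2, 1, 1, 1, 3].getD ((n - 1) % 11) 0 : ℝ)) ℓL)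
    (hR : IsCFVal (fun n => if n = 0 then 0 else
      ([1, 1, 1, 2, 1, 2, 1, 1, 3, 3, 3].getD ((n - 1) % 11) 0 : ℝ)) ℓR) :
    3.9387762419810 < ℓL + ℓR ∧ ℓL + ℓR < 3.9387762419811 := by
  have hposL : ∀ n, 0 < periodicCF 3 [3, 3, 1, 1, 2, 1, 2, 1, 1, 1, 3] (n + 1) :=
    periodicCF_succ_pos (by norm_num) (by simp)
  have hposR : ∀ n, 0 < periodicCF 0 [1, 1, 1, 2, 1, 2, 1, 1, 3, 3, 3] (n + 1) :=
    periodicCF_succ_pos (by norm_num) (by simp)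
  have hL₁ := hL.cfConv_two_mul_le hposL 11
  have hL₂ := hL.le_cfConv_two_mul_add_one hposL 11
  have hR₁ := hR.cfConv_two_mul_le hposR 11
  have hR₂ := hR.le_cfConv_two_mul_add_one hposR 11
  norm_num [cfConv, cfP, cfQ] at hL₁ hL₂ hR₁ hR₂
  constructor <;> linarith
end

section
/- For any bi-infinite sequence (a_i) ∈ {1,2,3}^ℤ with a_0 = 3, a_1 = 1, a_2 = 2, one has λ₀((a_i)) = [3; a_{−1}, a_{−2}, …] + [0; 1, 2, a_3, a_4, …] > 3.957. -/
open Filter Set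

lemma cfP_cfQ_succ (b : ℕ → ℝ) (n : ℕ) :
    cfP b (n + 1) = (b 0 * (cfP (fun i => b (i + 1)) n).1 + (cfQ (fun i => b (i + 1)) n).1,
                     b 0 * (cfP (fun i => b (i + 1)) n).2 + (cfQ (fun i => b (i + 1)) n).2) ∧
    cfQ b (n + 1) = cfP (fun i => b (i + 1)) n := by
  induction n with
  | zero => simp only [cfP, cfQ, Prod.ext_iff]; norm_num [mul_comm]
  | succ n ih =>
    obtain ⟨hP, hQ⟩ := ih
    simp only [cfP, cfQ, Prod.ext_iff] at hP hQ ⊢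
    refine ⟨⟨?_, hP.1⟩, ?_, hQ.1⟩
    · linear_combination b (n + 1 + 1) * hP.1 + hP.2
    · linear_combination b (n + 1 + 1) * hQ.1 + hQ.2

section Convergents

variable {b : ℕ → ℝ}

lemma cfP_fst_pos (hb : ∀ i, 0 < b i) (n : ℕ) : 0 < (cfP b n).1 := by
  suffices 0 < (cfP b n).1 ∧ 0 ≤ (cfP b n).2 from this.1
  induction n with
  | zero => exact ⟨hb 0, zero_le_one⟩
  | succ n ih =>
    exact ⟨add_pos_of_pos_of_nonneg (mul_pos (hb (n + 1)) ih.1) ih.2, ih.1.le⟩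

lemma cfConv_succ (hb : ∀ i, 0 < b (i + 1)) (n : ℕ) :
    cfConv b (n + 1) = b 0 + (cfConv (fun i => b (i + 1)) n)⁻¹ := by
  have hP := (cfP_fst_pos hb n).ne'
  obtain ⟨h₁, h₂⟩ := cfP_cfQ_succ b n
  rw [cfConv, cfConv, h₁, h₂, inv_div]
  field_simp

lemma cfConv_succ_mem_Icc {n : ℕ} {c C lo hi : ℝ} (hb : ∀ i, 0 < b (i + 1))
    (hb₀ : b 0 ∈ Icc c C) (hlo : 0 < lo) (hn : cfConv (fun i => b (i + 1)) n ∈ Icc lo hi) :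
    cfConv b (n + 1) ∈ Icc (c + hi⁻¹) (C + lo⁻¹) := by
  rw [cfConv_succ hb]
  have h₁ := inv_anti₀ (hlo.trans_le hn.1) hn.2
  have h₂ := inv_anti₀ hlo hn.1
  exact ⟨by linarith [hb₀.1], by linarith [hb₀.2]⟩

lemma cfConv_mem_Icc {d D : ℝ} (hd : 0 < d) (hb : ∀ i, b i ∈ Icc d D) (n : ℕ) :
    cfConv b n ∈ Icc d (D + d⁻¹) := by
  induction n generalizing b with
  | zero =>
    simp only [cfConv, cfP, cfQ, div_one]
    exact ⟨(hb 0).1, le_add_of_le_of_nonneg (hb 0).2 (inv_nonneg.2 hd.le)⟩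
  | succ n ih =>
    have hD : 0 ≤ D + d⁻¹ := by linarith [(hb 0).1, (hb 0).2, inv_pos.2 hd]
    refine Icc_subset_Icc (le_add_of_nonneg_right (inv_nonneg.2 hD)) le_rfl
      (cfConv_succ_mem_Icc (fun i => hd.trans_le (hb _).1) (hb 0) hd (ih fun i => hb _))

lemma eventually_cfConv_mem_Icc_of_tail {c C lo hi lo' hi' : ℝ}
    (h : ∀ᶠ n in atTop, cfConv (fun i => b (i + 1)) n ∈ Icc lo hi)
    (hb : ∀ i, 0 < b (i + 1)) (hb₀ : b 0 ∈ Icc c C) (hlo : 0 < lo)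
    (hlo' : lo' ≤ c + hi⁻¹) (hhi' : C + lo⁻¹ ≤ hi') :
    ∀ᶠ n in atTop, cfConv b n ∈ Icc lo' hi' := by
  obtain ⟨N, hN⟩ := eventually_atTop.1 h
  refine eventually_atTop.2 ⟨N + 1, fun n hn => ?_⟩
  obtain ⟨m, rfl⟩ : ∃ m, n = m + 1 := ⟨n - 1, by omega⟩
  exact Icc_subset_Icc hlo' hhi' (cfConv_succ_mem_Icc hb hb₀ hlo (hN m (by omega)))

lemma eventually_cfConv_mem_Icc_of_mem_Icc_one_three (hb : ∀ i, b i ∈ Icc (1 : ℝ) 3) :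
    ∀ᶠ n in atTop, cfConv b n ∈ Icc (24 / 19) (91 / 24) := by
  have hpos : ∀ i, 0 < b i := fun i => one_pos.trans_le (hb i).1
  have h₄ : ∀ᶠ n in atTop, cfConv (fun i => b (i + 4)) n ∈ Icc 1 (3 + 1⁻¹) :=
    Eventually.of_forall (cfConv_mem_Icc one_pos fun i => hb (i + 4))
  have h₃ : ∀ᶠ n in atTop, cfConv (fun i => b (i + 3)) n ∈ Icc (5 / 4) 4 :=
    eventually_cfConv_mem_Icc_of_tail h₄ (fun i => hpos _) (hb 3)
      (by norm_num) (by norm_num) (by norm_num)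
  have h₂ : ∀ᶠ n in atTop, cfConv (fun i => b (i + 2)) n ∈ Icc (5 / 4) (19 / 5) :=
    eventually_cfConv_mem_Icc_of_tail h₃ (fun i => hpos _) (hb 2)
      (by norm_num) (by norm_num) (by norm_num)
  have h₁ : ∀ᶠ n in atTop, cfConv (fun i => b (i + 1)) n ∈ Icc (24 / 19) (19 / 5) :=
    eventually_cfConv_mem_Icc_of_tail h₂ (fun i => hpos _) (hb 1)
      (by norm_num) (by norm_num) (by norm_num)
  exact eventually_cfConv_mem_Icc_of_tail h₁ (fun i => hpos _) (hb 0)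
    (by norm_num) (by norm_num) (by norm_num)

end Convergents

/-- For any bi-infinite sequence with digits in `{1,2,3}` and pattern `3* 1 2`, one has `λ₀ = [3; a₋₁, …] + [0; 1, 2, a₃, …] > 3.957`. -/
theorem stmt_14 (a : ℤ → ℕ) (hdig : ∀ i, 1 ≤ a i ∧ a i ≤ 3)
    (h0 : a 0 = 3) (h1 : a 1 = 1) (h2 : a 2 = 2)
    (ℓL ℓR : ℝ)
    (hL : IsCFVal (fun k => (a (-(k : ℤ)) : ℝ)) ℓL)
    (hR : IsCFVal (fun k => if k = 0 then 0 else (a k : ℝ)) ℓR) :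
    ℓL + ℓR > 3.957 := by
  have hdig' : ∀ i, (a i : ℝ) ∈ Icc 1 3 :=
    fun i => ⟨by exact_mod_cast (hdig i).1, by exact_mod_cast (hdig i).2⟩
  have hpos : ∀ i, (0 : ℝ) < a i := fun i => one_pos.trans_le (hdig' i).1
  have hL' : ∀ᶠ n in atTop, cfConv (fun k => (a (-(k : ℤ)) : ℝ)) n ∈ Icc (3 + 24 / 91) 4 :=
    eventually_cfConv_mem_Icc_of_tail
      (eventually_cfConv_mem_Icc_of_mem_Icc_one_three fun i => hdig' _) (fun i => hpos _)
      (c := 3) (C := 3) (by simp [h0]) (by norm_num) (by norm_num) (by norm_num)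
  have hR₂ : ∀ᶠ n in atTop, cfConv (fun k => (a (k + 2 : ℕ) : ℝ)) n ∈ Icc (2 + 24 / 91) 3 :=
    eventually_cfConv_mem_Icc_of_tail
      (eventually_cfConv_mem_Icc_of_mem_Icc_one_three fun i => hdig' _) (fun i => hpos _)
      (c := 2) (C := 2) (by simp [h2]) (by norm_num) (by norm_num) (by norm_num)
  have hR₁ : ∀ᶠ n in atTop, cfConv (fun k => (a (k + 1 : ℕ) : ℝ)) n ∈ Icc (4 / 3) (297 / 206) :=
    eventually_cfConv_mem_Icc_of_tail hR₂ (fun i => hpos _) (c := 1) (C := 1) (by simp [h1])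
      (by norm_num) (by norm_num) (by norm_num)
  have hR₀ : ∀ᶠ n in atTop, cfConv (fun k => if k = 0 then 0 else (a k : ℝ)) n ∈
      Icc (206 / 297) (3 / 4) :=
    eventually_cfConv_mem_Icc_of_tail (by simpa using hR₁) (by simpa using fun i => hpos _)
      (c := 0) (C := 0) (by simp) (by norm_num) (by norm_num) (by norm_num)
  have hℓL := ge_of_tendsto hL (hL'.mono fun _ h => h.1)
  have hℓR := ge_of_tendsto hR (hR₀.mono fun _ h => h.1)
  norm_num at hℓL hℓR ⊢
  linarith
end

section
/- Let a' < a'' and b' < b'' be reals, and let U = (a', a''), V = (b', b'') be open intervals. Let A, B ⊆ ℝ with A ∩ U = ∅ and B ∩ V = ∅, min A = a, min B = b, A ⊆ [a, ∞), B ⊆ [b, ∞), and suppose a'' − a' > b' − b and b'' − b' > a' − a. Then the interval (max(a' + b', a + b), min(a + b'', a'' + b)) is nonempty and disjoint from A + B. -/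
open scoped Pointwise

open Set

theorem le_or_le_of_inter_Ioo_eq_empty {α : Type*} [LinearOrder α] {A : Set α} {a' a'' x : α}
    (hgap : A ∩ Ioo a' a'' = ∅) (hx : x ∈ A) : x ≤ a' ∨ a'' ≤ x := by
  by_contra! h
  exact hgap.subset ⟨hx, h.1, h.2⟩

theorem Ioo_inter_add_eq_empty_of_gaps {α : Type*} [AddCommMonoid α] [LinearOrder α]
    [IsOrderedAddMonoid α] {A B : Set α} {a a' a'' b b' b'' : α}
    (hAU : A ∩ Ioo a' a'' = ∅) (hBV : B ∩ Ioo b' b'' = ∅)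
    (ha : a ∈ lowerBounds A) (hb : b ∈ lowerBounds B) :
    Ioo (a' + b') (min (a + b'') (a'' + b)) ∩ (A + B) = ∅ := by
  refine eq_empty_of_forall_notMem fun z ⟨⟨hlow, hup⟩, hz⟩ => ?_
  obtain ⟨x, hx, y, hy, rfl⟩ := hz
  rw [lt_min_iff] at hup
  rcases le_or_le_of_inter_Ioo_eq_empty hAU hx with hxa' | hxa''
  · rcases le_or_le_of_inter_Ioo_eq_empty hBV hy with hyb' | hyb''
    · exact (add_le_add hxa' hyb').not_gt hlow
    · exact (add_le_add (ha hx) hyb'').not_gt hup.1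
  · exact (add_le_add hxa'' (hb hy)).not_gt hup.2

theorem stmt_19_general (A B : Set ℝ) (a a' a'' b b' b'' : ℝ)
    (hAU : A ∩ Set.Ioo a' a'' = ∅) (hBV : B ∩ Set.Ioo b' b'' = ∅)
    (hminA : IsLeast A a) (hminB : IsLeast B b)
    (ha' : a ≤ a') (hb' : b ≤ b')
    (h1 : a'' - a' > b' - b) (h2 : b'' - b' > a' - a) :
    max (a' + b') (a + b) < min (a + b'') (a'' + b) ∧
      Set.Ioo (max (a' + b') (a + b)) (min (a + b'') (a'' + b)) ∩ (A + B) = ∅ := by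
  refine ⟨?_, ?_⟩
  · simp only [max_lt_iff, lt_min_iff]
    refine ⟨⟨?_, ?_⟩, ?_, ?_⟩ <;> linarith
  · refine subset_eq_empty ?_ (Ioo_inter_add_eq_empty_of_gaps hAU hBV hminA.2 hminB.2)
    exact inter_subset_inter_left _ (Ioo_subset_Ioo_left (le_max_left _ _))

/-- If `U = (a',a'')` is a gap of `A`, `V = (b',b'')` is a gap of `B`, `a = min A ≤ a'`,
`b = min B ≤ b'`, `a''−a' > b'−b` and `b''−b' > a'−a`, then the interval
`(max(a'+b', a+b), min(a+b'', a''+b))` is nonempty and disjoint from `A + B`. -/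
theorem stmt_19 (A B : Set ℝ) (a a' a'' b b' b'' : ℝ)
    (ha : a' < a'') (hb : b' < b'')
    (hAU : A ∩ Set.Ioo a' a'' = ∅) (hBV : B ∩ Set.Ioo b' b'' = ∅)
    (hminA : IsLeast A a) (hminB : IsLeast B b)
    (ha' : a ≤ a') (hb' : b ≤ b')
    (h1 : a'' - a' > b' - b) (h2 : b'' - b' > a' - a) :
    max (a' + b') (a + b) < min (a + b'') (a'' + b) ∧
      Set.Ioo (max (a' + b') (a + b)) (min (a + b'') (a'' + b)) ∩ (A + B) = ∅ :=
  stmt_19_general A B a a' a'' b b' b'' hAU hBV hminA hminB ha' hb' h1 h2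
end
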